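/- Let N ≥ 2 be an integer and γ > 1. Then along the infinitesimal Moser sequence w_j one has J_γ(w_j) = ∫₀¹ exp( ( log(e/s) + γ·log log(e/s) ) · w_j(s)^N / s^{N−1} ) ds → +∞ as j → ∞; more precisely J_γ(w_j) ≥ e·(log(ej))^{γ−1}(1 + o(1)). In particular sup_{v ∈ E_N} J_γ(v) = +∞ for γ > 1. -/

import Mathlib

open MeasureTheory Real Set Filter

/-- `u` belongs to `E_N` with weak derivative `g`. -/
def MemEN (N : ℕ) (u g : ℝ → ℝ) : Prop :=
  (∀ s ∈ Set.Icc (0:ℝ) 1, u s = ∫ t in (0:ℝ)..s, g t) ∧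
  u 0 = 0 ∧
  IntervalIntegrable g MeasureTheory.volume 0 1 ∧
  MeasureTheory.IntegrableOn (fun t => |g t| ^ N) (Set.Ioc (0:ℝ) 1) ∧
  (∫ t in Set.Ioc (0:ℝ) 1, |g t| ^ N) = 1

/-- The improved (log log) Bliss-Moser functional `J_γ`. -/
noncomputable def Jfun (N : ℕ) (γ : ℝ) (v : ℝ → ℝ) : ℝ :=
  ∫ s in Set.Ioc (0:ℝ) 1,
    Real.exp ((Real.log (Real.exp 1 / s) + γ * Real.log (Real.log (Real.exp 1 / s))) *
      (v s ^ N / s ^ (N - 1)))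

/-- The infinitesimal Moser sequence `w_j`. -/
noncomputable def moser (N j : ℕ) (t : ℝ) : ℝ :=
  if t ≤ 1 / (j : ℝ) then (j : ℝ) ^ ((1:ℝ) / N) * t
  else (j : ℝ) ^ (-(((N:ℝ) - 1) / N))


/-! On `(0, 1/j]` the Moser function satisfies `w_j(s)^N / s^(N-1) = j s`, and the weight
`log (e/s) + γ log log (e/s)` is decreasing, hence at least its value `M_j = L + γ log L` at
`s = 1/j`, where `L = log (e j)`. So `J_γ(w_j) ≥ ∫₀^{1/j} exp (j M_j s) ds = (e^{M_j} - 1)/(j M_j)`,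
and since `e^{M_j} = e j L^γ` this equals `e L^(γ-1) (1 - e^{-M_j}) L / M_j = e L^(γ-1) (1 + o(1))`,
which tends to infinity because `γ > 1`. -/

open Topology

lemma setIntegral_Ioc_indicator_Iic_const {b d : ℝ} (c : ℝ) (hb : 0 ≤ b) (hd : 0 ≤ d) :
    ∫ t in Ioc 0 b, (Iic d).indicator (fun _ => c) t = min b d * c := by
  rw [integral_indicator_const c measurableSet_Iic, measureReal_restrict_apply measurableSet_Iic,
    inter_comm, Ioc_inter_Iic, measureReal_def, Real.volume_Ioc,
    ENNReal.toReal_ofReal (by simp [hb, hd]), sub_zero, smul_eq_mul]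

lemma integral_exp_mul_Ioc {b c : ℝ} (hb : 0 ≤ b) (hc : c ≠ 0) :
    ∫ s in Ioc 0 b, exp (c * s) = (exp (c * b) - 1) / c := by
  rw [← intervalIntegral.integral_of_le hb,
    intervalIntegral.integral_comp_mul_left (fun s => exp s) hc, integral_exp, mul_zero, exp_zero,
    smul_eq_mul, inv_mul_eq_div]

section Moser

variable {N j : ℕ} {s : ℝ}

@[fun_prop]
lemma measurable_moser : Measurable (moser N j) :=
  Measurable.ite measurableSet_Iic (measurable_const.mul measurable_id) measurable_const

lemma moser_nonneg (hs : 0 ≤ s) : 0 ≤ moser N j s := by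
  unfold moser
  split_ifs <;> positivity

lemma moser_pow_of_le (hN : N ≠ 0) (hs : s ≤ 1 / j) : moser N j s ^ N = j * s ^ N := by
  rw [moser, if_pos hs, mul_pow, one_div, rpow_inv_natCast_pow j.cast_nonneg hN]

lemma moser_pow_of_lt (hN : N ≠ 0) (hs : 1 / j < s) :
    moser N j s ^ N = ((j : ℝ) ^ (N - 1))⁻¹ := by
  have hN1 : ((N - 1 : ℕ) : ℝ) = N - 1 := by rw [Nat.cast_sub (by omega), Nat.cast_one]
  rw [moser, if_neg hs.not_ge, ← rpow_natCast, ← rpow_mul j.cast_nonneg, ← rpow_natCast,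
    ← rpow_neg j.cast_nonneg, hN1, neg_mul, div_mul_cancel₀ _ (by exact_mod_cast hN)]

lemma moser_pow_div_of_le (hN : N ≠ 0) (hs0 : 0 < s) (hs : s ≤ 1 / j) :
    moser N j s ^ N / s ^ (N - 1) = j * s := by
  rw [moser_pow_of_le hN hs, ← Nat.sub_add_cancel (Nat.one_le_iff_ne_zero.mpr hN), pow_succ,
    Nat.add_sub_cancel]
  field_simp

lemma moser_pow_div_le (hN : N ≠ 0) (hj : 0 < j) (hs0 : 0 < s) :
    moser N j s ^ N / s ^ (N - 1) ≤ j * s := by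
  rcases le_or_gt s (1 / j) with hs | hs
  · exact (moser_pow_div_of_le hN hs0 hs).le
  · have hjs : 1 ≤ j * s := by
      rw [div_lt_iff₀ (by positivity), mul_comm] at hs
      exact hs.le
    rw [moser_pow_of_lt hN hs, div_eq_mul_inv, ← mul_inv, ← mul_pow]
    exact (inv_le_one_of_one_le₀ (one_le_pow₀ hjs)).trans hjs

lemma memEN_moser (hN : N ≠ 0) (hj : 0 < j) :
    MemEN N (moser N j) ((Iic (1 / j : ℝ)).indicator fun _ => (j : ℝ) ^ ((1 : ℝ) / N)) := by
  have hj0 : (0 : ℝ) < j := by exact_mod_cast hj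
  have hinv : (0 : ℝ) ≤ 1 / j := by positivity
  have hpow : (fun t => |(Iic (1 / j : ℝ)).indicator (fun _ => (j : ℝ) ^ ((1 : ℝ) / N)) t| ^ N) =
      (Iic (1 / j : ℝ)).indicator fun _ => (j : ℝ) := by
    ext t
    by_cases ht : t ∈ Iic (1 / j : ℝ)
    · rw [indicator_of_mem ht, indicator_of_mem ht, abs_of_nonneg (by positivity), one_div,
        rpow_inv_natCast_pow hj0.le hN]
    · rw [indicator_of_notMem ht, indicator_of_notMem ht, abs_zero, zero_pow hN]
  refine ⟨fun s ⟨hs0, _⟩ => ?_, by simp [moser], ?_, ?_, ?_⟩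
  · rw [intervalIntegral.integral_of_le hs0, setIntegral_Ioc_indicator_Iic_const _ hs0 hinv]
    rcases le_or_gt s (1 / j) with hs | hs
    · rw [moser, if_pos hs, min_eq_left hs, mul_comm]
    · rw [moser, if_neg hs.not_ge, min_eq_right hs.le, one_div, ← rpow_neg_one,
        ← rpow_add hj0]
      congr 1
      field_simp
      ring
  · rw [intervalIntegrable_iff_integrableOn_Ioc_of_le zero_le_one]
    exact (integrableOn_const measure_Ioc_lt_top.ne).indicator measurableSet_Iic
  · rw [hpow]
    exact (integrableOn_const measure_Ioc_lt_top.ne).indicator measurableSet_Iic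
  · rw [hpow, setIntegral_Ioc_indicator_Iic_const _ zero_le_one hinv,
      min_eq_right ((div_le_one hj0).mpr (by exact_mod_cast hj)), one_div_mul_cancel hj0.ne']

end Moser

noncomputable def blissWeight (γ s : ℝ) : ℝ :=
  log (exp 1 / s) + γ * log (log (exp 1 / s))

lemma Jfun_eq_integral_blissWeight (N : ℕ) (γ : ℝ) (v : ℝ → ℝ) :
    Jfun N γ v = ∫ s in Ioc 0 1, exp (blissWeight γ s * (v s ^ N / s ^ (N - 1))) :=
  rfl

lemma blissWeight_one_div (γ x : ℝ) :
    blissWeight γ (1 / x) = log (exp 1 * x) + γ * log (log (exp 1 * x)) := by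
  rw [blissWeight, div_div_eq_mul_div, div_one]

section BlissWeight

variable {γ s : ℝ}

lemma one_le_log_exp_one_div (hs0 : 0 < s) (hs1 : s ≤ 1) : 1 ≤ log (exp 1 / s) := by
  rw [log_div (exp_pos 1).ne' hs0.ne', log_exp]
  linarith [log_nonpos hs0.le hs1]

lemma one_le_blissWeight (hγ : 0 ≤ γ) (hs0 : 0 < s) (hs1 : s ≤ 1) : 1 ≤ blissWeight γ s := by
  have h := one_le_log_exp_one_div hs0 hs1
  have : 0 ≤ γ * log (log (exp 1 / s)) := mul_nonneg hγ (log_nonneg h)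
  rw [blissWeight]
  linarith

lemma blissWeight_le (hγ : 0 ≤ γ) (hs0 : 0 < s) (hs1 : s ≤ 1) :
    blissWeight γ s ≤ (1 + γ) * (exp 1 / s) := by
  have h := one_le_log_exp_one_div hs0 hs1
  have hlog : log (exp 1 / s) ≤ exp 1 / s := log_le_self (by positivity)
  have hloglog : log (log (exp 1 / s)) ≤ exp 1 / s := (log_le_self (by linarith)).trans hlog
  rw [blissWeight]
  nlinarith

lemma blissWeight_antitoneOn (hγ : 0 ≤ γ) : AntitoneOn (blissWeight γ) (Ioc 0 1) := by
  rintro s ⟨hs0, hs1⟩ t ⟨ht0, ht1⟩ hst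
  have hlog : log (exp 1 / t) ≤ log (exp 1 / s) :=
    log_le_log (by positivity) (div_le_div_of_nonneg_left (exp_pos 1).le hs0 hst)
  have hloglog : log (log (exp 1 / t)) ≤ log (log (exp 1 / s)) :=
    log_le_log (by linarith [one_le_log_exp_one_div ht0 ht1]) hlog
  rw [blissWeight, blissWeight]
  gcongr

end BlissWeight

section LowerBound

variable {N j : ℕ} {γ : ℝ}

lemma integrableOn_exp_blissWeight_mul_moser (hN : N ≠ 0) (hγ : 0 ≤ γ) (hj : 0 < j) :
    IntegrableOn (fun s => exp (blissWeight γ s * (moser N j s ^ N / s ^ (N - 1)))) (Ioc 0 1) := by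
  refine Measure.integrableOn_of_bounded (M := exp ((1 + γ) * exp 1 * j)) measure_Ioc_lt_top.ne
    (by unfold blissWeight; fun_prop) ?_
  filter_upwards [ae_restrict_mem measurableSet_Ioc] with s ⟨hs0, hs1⟩
  rw [norm_of_nonneg (exp_pos _).le, exp_le_exp]
  have hq0 : 0 ≤ moser N j s ^ N / s ^ (N - 1) := by
    have := moser_nonneg (N := N) (j := j) hs0.le
    positivity
  calc blissWeight γ s * (moser N j s ^ N / s ^ (N - 1))
      ≤ (1 + γ) * (exp 1 / s) * (j * s) :=
        mul_le_mul (blissWeight_le hγ hs0 hs1) (moser_pow_div_le hN hj hs0) hq0 (by positivity)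
    _ = (1 + γ) * exp 1 * j := by field_simp

theorem le_Jfun_moser (hN : N ≠ 0) (hγ : 0 ≤ γ) (hj : 0 < j) :
    (exp (blissWeight γ (1 / j)) - 1) / (j * blissWeight γ (1 / j)) ≤ Jfun N γ (moser N j) := by
  set M := blissWeight γ (1 / j)
  have hj0 : (0 : ℝ) < j := by exact_mod_cast hj
  have hinv : 1 / (j : ℝ) ∈ Ioc 0 1 :=
    ⟨by positivity, (div_le_one hj0).mpr (by exact_mod_cast hj)⟩
  have hM : 0 < M := one_pos.trans_le (one_le_blissWeight hγ hinv.1 hinv.2)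
  have hint := integrableOn_exp_blissWeight_mul_moser hN hγ hj
  rw [Jfun_eq_integral_blissWeight]
  calc (exp M - 1) / (j * M) = ∫ s in Ioc 0 (1 / (j : ℝ)), exp (j * M * s) := by
        rw [integral_exp_mul_Ioc hinv.1.le (by positivity)]
        field_simp
    _ ≤ ∫ s in Ioc 0 (1 / (j : ℝ)), exp (blissWeight γ s * (moser N j s ^ N / s ^ (N - 1))) := by
        refine setIntegral_mono_on (continuous_exp.comp (continuous_const_mul _)).integrableOn_Ioc
          (hint.mono_set (Ioc_subset_Ioc_right hinv.2)) measurableSet_Ioc ?_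
        rintro s ⟨hs0, hs⟩
        rw [exp_le_exp, moser_pow_div_of_le hN hs0 hs, mul_comm (j : ℝ) M, mul_assoc]
        exact mul_le_mul_of_nonneg_right
          (blissWeight_antitoneOn hγ ⟨hs0, hs.trans hinv.2⟩ hinv hs) (by positivity)
    _ ≤ ∫ s in Ioc 0 1, exp (blissWeight γ s * (moser N j s ^ N / s ^ (N - 1))) :=
        setIntegral_mono_set hint (ae_of_all _ fun _ => (exp_pos _).le)
          (Ioc_subset_Ioc_right hinv.2).eventuallyLE

end LowerBound

/-- The `o(1)` term as a function of `x = log (e j)`, for which `x + γ log x = M_j`. -/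
noncomputable def moserRelError (γ x : ℝ) : ℝ :=
  (1 - exp (-(x + γ * log x))) * (x / (x + γ * log x)) - 1

lemma tendsto_moserRelError {γ : ℝ} (hγ : 0 ≤ γ) : Tendsto (moserRelError γ) atTop (𝓝 0) := by
  have hlog : Tendsto (fun x => log x / x) atTop (𝓝 0) :=
    isLittleO_log_id_atTop.tendsto_div_nhds_zero
  have hratio : Tendsto (fun x => x / (x + γ * log x)) atTop (𝓝 1) := by
    have h := ((hlog.const_mul γ).const_add 1).inv₀ (by simp)
    rw [mul_zero, add_zero, inv_one] at h
    refine h.congr' ?_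
    filter_upwards [eventually_gt_atTop 0] with x hx
    field_simp
  have hexp : Tendsto (fun x => exp (-(x + γ * log x))) atTop (𝓝 0) := by
    refine tendsto_exp_neg_atTop_nhds_zero.comp (tendsto_atTop_mono' _ ?_ tendsto_id)
    filter_upwards [eventually_ge_atTop 1] with x hx
    simpa using mul_nonneg hγ (log_nonneg hx)
  have h := (((tendsto_const_nhds (x := (1 : ℝ))).sub hexp).mul hratio).sub_const 1
  rwa [sub_zero, one_mul, sub_self] at h

lemma exp_one_mul_rpow_mul_one_add_moserRelError {γ : ℝ} (hγ : 0 ≤ γ) {j : ℕ} (hj : 0 < j) :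
    exp 1 * log (exp 1 * j) ^ (γ - 1) * (1 + moserRelError γ (log (exp 1 * j))) =
      (exp (blissWeight γ (1 / j)) - 1) / (j * blissWeight γ (1 / j)) := by
  have hj0 : (0 : ℝ) < j := by exact_mod_cast hj
  rw [blissWeight_one_div]
  set L := log (exp 1 * j)
  have hL : 1 ≤ L := by
    rw [← log_exp 1]
    exact log_le_log (exp_pos 1) (le_mul_of_one_le_right (exp_pos 1).le (by exact_mod_cast hj))
  have hM : 0 < L + γ * log L := by nlinarith [log_nonneg hL]
  have hexpM : exp (L + γ * log L) = exp 1 * j * (L ^ (γ - 1) * L) := by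
    rw [exp_add, exp_log (by positivity), ← rpow_add_one (by positivity), sub_add_cancel,
      rpow_def_of_pos (by positivity), mul_comm γ]
  rw [moserRelError, exp_neg, hexpM]
  field_simp
  ring

/-- for `γ > 1`, `J_γ (w_j) → +∞` along the infinitesimal Moser sequence,
more precisely `J_γ(w_j) ≥ e · (log (e j))^{γ-1} (1 + o(1))`; in particular
`sup_{v ∈ E_N} J_γ(v) = +∞`. -/
theorem Jfun_moser_tendsto_atTop (N : ℕ) (hN : 2 ≤ N) (γ : ℝ) (hγ : 1 < γ) :
    Filter.Tendsto (fun j : ℕ => Jfun N γ (moser N j)) Filter.atTop Filter.atTop ∧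
    (∃ ε : ℕ → ℝ, Filter.Tendsto ε Filter.atTop (nhds 0) ∧
      ∀ᶠ j : ℕ in Filter.atTop,
        Real.exp 1 * Real.log (Real.exp 1 * j) ^ (γ - 1) * (1 + ε j) ≤
          Jfun N γ (moser N j)) ∧
    (∀ C : ℝ, ∃ u g : ℝ → ℝ, MemEN N u g ∧ C < Jfun N γ u) := by
  have hN0 : N ≠ 0 := by omega
  have hγ0 : 0 ≤ γ := by linarith
  have hL : Tendsto (fun j : ℕ => log (exp 1 * j)) atTop atTop :=
    tendsto_log_atTop.comp (tendsto_natCast_atTop_atTop.const_mul_atTop (exp_pos 1))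
  set ε := fun j : ℕ => moserRelError γ (log (exp 1 * j))
  have hε : Tendsto ε atTop (𝓝 0) := (tendsto_moserRelError hγ0).comp hL
  have hlow : ∀ᶠ j : ℕ in atTop,
      exp 1 * log (exp 1 * j) ^ (γ - 1) * (1 + ε j) ≤ Jfun N γ (moser N j) := by
    filter_upwards [eventually_gt_atTop 0] with j hj
    rw [exp_one_mul_rpow_mul_one_add_moserRelError hγ0 hj]
    exact le_Jfun_moser hN0 hγ0 hj
  have htend : Tendsto (fun j : ℕ => Jfun N γ (moser N j)) atTop atTop := by
    refine tendsto_atTop_mono' _ hlow (Tendsto.atTop_mul_pos one_pos ?_ ?_)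
    · exact ((tendsto_rpow_atTop (by linarith)).comp hL).const_mul_atTop (exp_pos 1)
    · simpa using hε.const_add 1
  refine ⟨htend, ⟨ε, hε, hlow⟩, fun C => ?_⟩
  obtain ⟨j, hjC, hj⟩ := ((htend.eventually_gt_atTop C).and (eventually_gt_atTop 0)).exists
  exact ⟨moser N j, _, memEN_moser hN0 hj, hjC⟩
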